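/- arXiv:1705.09316 — 3 statements merged into one kernel-verified Lean document; each statement's English description precedes it below -/
import Mathlib

section
/- Let X be Gaussian with mean λ₁ and standard deviation λ₂ ≥ 0, p ∈ (0.5, 1), and suppose λ₂ᵘ ≥ λ₂. If λ₁ + F⁻¹(p)·λ₂ᵘ ≤ 0, then P(X ≤ 0) ≥ p. -/
open MeasureTheory ProbabilityTheory

/-- The quantile function (generalized inverse of the CDF) of the standard normal
distribution `N(0,1)`. -/
noncomputable def stdNormalQuantile (p : ℝ) : ℝ :=
  sInf {x : ℝ | p ≤ cdf (gaussianReal 0 1) x}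

/-! A standard normal variable `Z` satisfies `P(Z ≤ F⁻¹(p)) ≥ p`, and `F⁻¹(p) ≥ 0` for `p > 1/2`
by symmetry of `N(0,1)`. Writing `X = λ₁ + λ₂ Z`, the event `Z ≤ F⁻¹(p)` forces
`X ≤ λ₁ + λ₂ F⁻¹(p) ≤ λ₁ + λ₂ᵘ F⁻¹(p) ≤ 0`, where the middle step uses `F⁻¹(p) ≥ 0`. -/

lemma StieltjesFunction.le_apply_sInf_setOf_le (f : StieltjesFunction ℝ) {p : ℝ}
    (hne : {x | p ≤ f x}.Nonempty) : p ≤ f (sInf {x | p ≤ f x}) := by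
  have h_above : ∀ x, sInf {x | p ≤ f x} < x → p ≤ f x := fun x hx ↦ by
    obtain ⟨s, hs, hsx⟩ := exists_lt_of_csInf_lt hne hx
    exact hs.trans (f.mono hsx.le)
  exact ge_of_tendsto ((f.right_continuous _).mono Set.Ioi_subset_Ici_self)
    (eventually_nhdsWithin_of_forall h_above)

lemma nonempty_setOf_le_cdf (μ : Measure ℝ) [IsProbabilityMeasure μ] {p : ℝ} (hp : p < 1) :
    {x | p ≤ cdf μ x}.Nonempty :=
  ((tendsto_cdf_atTop μ).eventually_const_le hp).exists

lemma cdf_le_half_of_map_neg_eq_self {μ : Measure ℝ} [IsProbabilityMeasure μ]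
    (hμ : μ.map (fun x ↦ -x) = μ) {x : ℝ} (hx : x < 0) : cdf μ x ≤ 1 / 2 := by
  have h_symm : μ.real (Set.Iic x) = μ.real (Set.Ici (-x)) := by
    conv_lhs => rw [← hμ]
    rw [map_measureReal_apply measurable_neg measurableSet_Iic]
    congr 1
    ext y
    simp
  have h_tail : μ.real (Set.Ici (-x)) ≤ μ.real (Set.Ioi x) :=
    measureReal_mono fun y hy ↦ lt_of_lt_of_le (by linarith) (Set.mem_Ici.mp hy)
  have h_total : μ.real (Set.Iic x) + μ.real (Set.Ioi x) = 1 := by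
    rw [← measureReal_union (Set.Iic_disjoint_Ioi le_rfl) measurableSet_Ioi, Set.Iic_union_Ioi,
      probReal_univ]
  rw [cdf_eq_real]
  linarith

lemma stdNormalQuantile_nonneg {p : ℝ} (hp : 1 / 2 < p) (hp1 : p < 1) :
    0 ≤ stdNormalQuantile p := by
  refine le_csInf (nonempty_setOf_le_cdf _ hp1) fun x hx ↦ ?_
  by_contra! hx_neg
  have hpx : p ≤ cdf (gaussianReal 0 1) x := hx
  have h_symm : (gaussianReal 0 1).map (fun x ↦ -x) = gaussianReal 0 1 := by
    simpa using gaussianReal_map_neg (μ := 0) (v := 1)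
  linarith [cdf_le_half_of_map_neg_eq_self h_symm hx_neg]

lemma le_cdf_stdNormalQuantile {p : ℝ} (hp1 : p < 1) :
    p ≤ cdf (gaussianReal 0 1) (stdNormalQuantile p) :=
  (cdf _).le_apply_sInf_setOf_le (nonempty_setOf_le_cdf _ hp1)

lemma gaussianReal_eq_map_const_add_mul (m s : ℝ) :
    gaussianReal m ⟨s ^ 2, sq_nonneg s⟩ = (gaussianReal 0 1).map (fun x ↦ m + s * x) := by
  have h_comp : (fun x ↦ m + s * x) = (m + ·) ∘ (s * ·) := rfl
  rw [h_comp, ← Measure.map_map (by fun_prop) (by fun_prop), gaussianReal_map_const_mul,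
    gaussianReal_map_const_add]
  congr 1
  · ring
  · rw [mul_one]; rfl

theorem gaussian_chance_constraint_under_approx_high_p
    {Ω : Type*} [MeasurableSpace Ω] (P : Measure Ω) [IsProbabilityMeasure P]
    (X : Ω → ℝ) (lam1 lam2 lam2u p : ℝ) (hlam2 : 0 ≤ lam2)
    (hp : p ∈ Set.Ioo (0.5 : ℝ) 1)
    (hX : Measure.map X P = gaussianReal lam1 ⟨lam2 ^ 2, sq_nonneg lam2⟩)
    (hub : lam2 ≤ lam2u)
    (hsat : lam1 + stdNormalQuantile p * lam2u ≤ 0) :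
    p ≤ (P {ω | X ω ≤ 0}).toReal := by
  obtain ⟨hp_half, hp1⟩ := hp
  set q := stdNormalQuantile p
  have hq : 0 ≤ q := stdNormalQuantile_nonneg (by norm_num at hp_half ⊢; linarith) hp1
  have hX_meas : AEMeasurable X P :=
    .of_map_ne_zero (hX ▸ (instIsProbabilityMeasureGaussianReal _ _).ne_zero)
  have h_law : P.real {ω | X ω ≤ 0} =
      (gaussianReal 0 1).real ((fun x ↦ lam1 + lam2 * x) ⁻¹' Set.Iic 0) := by
    rw [← map_measureReal_apply (by fun_prop) measurableSet_Iic,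
      ← gaussianReal_eq_map_const_add_mul, ← hX,
      map_measureReal_apply_of_aemeasurable hX_meas measurableSet_Iic]
    rfl
  have h_sub : Set.Iic q ⊆ (fun x ↦ lam1 + lam2 * x) ⁻¹' Set.Iic 0 := fun x hx ↦ by
    have := mul_le_mul_of_nonneg_left (Set.mem_Iic.mp hx) hlam2
    have := mul_le_mul_of_nonneg_left hub hq
    simp only [Set.mem_preimage, Set.mem_Iic]
    linarith
  calc p ≤ cdf (gaussianReal 0 1) q := le_cdf_stdNormalQuantile hp1
    _ = (gaussianReal 0 1).real (Set.Iic q) := cdf_eq_real _ _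
    _ ≤ P.real {ω | X ω ≤ 0} := h_law ▸ measureReal_mono h_sub
end

section
/- For contracts C₁ = (A₁, G₁) and C₂ = (A₂, G₂) in canonical form, C₁ ⪯ C₂ holds if and only if the implications A₂ → A₁ and G₁ → G₂ hold as set inclusions: A₂ ⊆ A₁ and G₁ ⊆ G₂; moreover, under canonical form, G₁ ⊆ G₂ is equivalent to (A₁ ∩ G₁ᶜ) ∪ G₂ ∪ A₂ᶜ = B. -/
/-- Refinement of assume-guarantee contracts `(A, G)` over a behavior set `B`:
`(A, G) ⪯ (A', G')` iff `A' ⊆ A` and `G ⊆ G'`. -/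
def ContractRefines {B : Type*} (C C' : Set B × Set B) : Prop :=
  C'.1 ⊆ C.1 ∧ C.2 ⊆ C'.2

/- Under `aᶜ ≤ g` and `a'ᶜ ≤ g'` the join collapses to `gᶜ ⊔ g'`, i.e. to `g ⇨ g'`, which is `⊤`
exactly when `g ≤ g'`. -/
theorem le_iff_inf_compl_sup_sup_compl_eq_top {α : Type*} [BooleanAlgebra α] {a g a' g' : α}
    (ha : aᶜ ≤ g) (ha' : a'ᶜ ≤ g') : g ≤ g' ↔ a ⊓ gᶜ ⊔ g' ⊔ a'ᶜ = ⊤ := by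
  rw [inf_eq_right.mpr (compl_le_of_compl_le ha), sup_assoc, sup_eq_left.mpr ha', sup_comm,
    ← himp_eq, himp_eq_top_iff]

theorem refinement_canonical_iff {B : Type*} (A₁ G₁ A₂ G₂ : Set B)
    (hcan₁ : A₁ᶜ ⊆ G₁) (hcan₂ : A₂ᶜ ⊆ G₂) :
    (ContractRefines (A₁, G₁) (A₂, G₂) ↔ A₂ ⊆ A₁ ∧ G₁ ⊆ G₂) ∧
    (G₁ ⊆ G₂ ↔ (A₁ ∩ G₁ᶜ) ∪ G₂ ∪ A₂ᶜ = Set.univ) :=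
  ⟨Iff.rfl, le_iff_inf_compl_sup_sup_compl_eq_top hcan₁ hcan₂⟩
end

section
/- Define an abstract over-approximation scheme: for each formula ψ and time k, a predicate Cₖ(ψ) on signals such that for atomic predicates ((z,k) ⊨ μ) → Cₖ(μ), and extend Cₖ recursively through ∧, ∨, G_{[t₁,t₂]}, and U_{[t₁,t₂]} following the satisfaction semantics. Then for every formula ψ in negation normal form, (z,k) ⊨ ψ implies Cₖ(ψ)(z); hence if Cₖ(ψ) is unsatisfiable, ψ is unsatisfiable at time k. -/
/-- Bounded StSTL formulas in negation normal form: (possibly negated) atomic predicates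
are abstracted by `α`; the connectives are conjunction, disjunction, bounded globally and
bounded until. -/
inductive StSTL (α : Type*) where
  | atom : α → StSTL α
  | conj : StSTL α → StSTL α → StSTL α
  | disj : StSTL α → StSTL α → StSTL α
  | glob : ℤ → ℤ → StSTL α → StSTL α
  | untl : ℤ → ℤ → StSTL α → StSTL α → StSTL α

/-- Satisfaction `(z, k) ⊨ ψ` of a bounded StSTL formula over discrete-time signals,
given the satisfaction relation `satAtom` for atomic predicates. -/
def StSTL.Sat {α Sig : Type*} (satAtom : α → Sig → ℤ → Prop) :
    StSTL α → Sig → ℤ → Prop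
  | .atom a, z, k => satAtom a z k
  | .conj φ ψ, z, k => φ.Sat satAtom z k ∧ ψ.Sat satAtom z k
  | .disj φ ψ, z, k => φ.Sat satAtom z k ∨ ψ.Sat satAtom z k
  | .glob t₁ t₂ φ, z, k => ∀ i ∈ Set.Icc (k + t₁) (k + t₂), φ.Sat satAtom z i
  | .untl t₁ t₂ φ ψ, z, k =>
      ∃ i ∈ Set.Icc (k + t₁) (k + t₂),
        ψ.Sat satAtom z i ∧ ∀ j ∈ Set.Icc (k + t₁) (i - 1), φ.Sat satAtom z j

namespace StSTL

variable {α Sig : Type*} (satAtom : α → Sig → ℤ → Prop) (C : StSTL α → ℤ → Sig → Prop)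

structure IsOverApprox : Prop where
  atom : ∀ a k z, satAtom a z k → C (.atom a) k z
  conj : ∀ φ ψ k z, C φ k z → C ψ k z → C (.conj φ ψ) k z
  disj : ∀ φ ψ k z, C φ k z ∨ C ψ k z → C (.disj φ ψ) k z
  glob : ∀ t₁ t₂ φ k z, (∀ i ∈ Set.Icc (k + t₁) (k + t₂), C φ i z) → C (.glob t₁ t₂ φ) k z
  untl : ∀ t₁ t₂ φ ψ k z,
    (∃ i ∈ Set.Icc (k + t₁) (k + t₂), C ψ i z ∧ ∀ j ∈ Set.Icc (k + t₁) (i - 1), C φ j z) →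
      C (.untl t₁ t₂ φ ψ) k z

variable {satAtom C}

theorem IsOverApprox.of_sat (hC : IsOverApprox satAtom C) {φ : StSTL α} {z : Sig} {k : ℤ}
    (hφ : φ.Sat satAtom z k) : C φ k z := by
  induction φ generalizing k with
  | atom a => exact hC.atom a k z hφ
  | conj φ ψ ihφ ihψ => exact hC.conj φ ψ k z (ihφ hφ.1) (ihψ hφ.2)
  | disj φ ψ ihφ ihψ => exact hC.disj φ ψ k z (hφ.imp ihφ ihψ)
  | glob t₁ t₂ φ ih => exact hC.glob t₁ t₂ φ k z fun i hi => ih (hφ i hi)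
  | untl t₁ t₂ φ ψ ihφ ihψ =>
    obtain ⟨i, hi, hψi, hφj⟩ := hφ
    exact hC.untl t₁ t₂ φ ψ k z ⟨i, hi, ihψ hψi, fun j hj => ihφ (hφj j hj)⟩

theorem IsOverApprox.not_sat_of_forall_not (hC : IsOverApprox satAtom C) {φ : StSTL α} {k : ℤ}
    (hunsat : ∀ z, ¬ C φ k z) (z : Sig) : ¬ φ.Sat satAtom z k :=
  fun hφ => hunsat z (hC.of_sat hφ)

end StSTL

theorem over_approximation_sound {α Sig : Type*}
    (satAtom : α → Sig → ℤ → Prop)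
    (C : StSTL α → ℤ → Sig → Prop)
    (hatom : ∀ (a : α) (k : ℤ) (z : Sig), satAtom a z k → C (.atom a) k z)
    (hconj : ∀ φ ψ k z, C (.conj φ ψ) k z ↔ C φ k z ∧ C ψ k z)
    (hdisj : ∀ φ ψ k z, C (.disj φ ψ) k z ↔ C φ k z ∨ C ψ k z)
    (hglob : ∀ t₁ t₂ φ k z,
      C (.glob t₁ t₂ φ) k z ↔ ∀ i ∈ Set.Icc (k + t₁) (k + t₂), C φ i z)
    (huntl : ∀ t₁ t₂ φ ψ k z,
      C (.untl t₁ t₂ φ ψ) k z ↔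
        ∃ i ∈ Set.Icc (k + t₁) (k + t₂),
          C ψ i z ∧ ∀ j ∈ Set.Icc (k + t₁) (i - 1), C φ j z) :
    (∀ (φ : StSTL α) (z : Sig) (k : ℤ), φ.Sat satAtom z k → C φ k z) ∧
    (∀ (φ : StSTL α) (k : ℤ), (∀ z : Sig, ¬ C φ k z) → ∀ z : Sig, ¬ φ.Sat satAtom z k) := by
  have hC : StSTL.IsOverApprox satAtom C :=
    { atom := hatom
      conj := fun φ ψ k z hφ hψ => (hconj φ ψ k z).2 ⟨hφ, hψ⟩
      disj := fun φ ψ k z h => (hdisj φ ψ k z).2 h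
      glob := fun t₁ t₂ φ k z h => (hglob t₁ t₂ φ k z).2 h
      untl := fun t₁ t₂ φ ψ k z h => (huntl t₁ t₂ φ ψ k z).2 h }
  exact ⟨fun _ _ _ => hC.of_sat, fun _ _ => hC.not_sat_of_forall_not⟩
end
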